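/- arXiv:1701.06089 — 2 statements merged into one kernel-verified Lean document; each statement's English description precedes it below -/
import Mathlib

section
/- Let V be an irreducible H_q-module on which Y = t_0 t_1 is diagonalizable. Then Y is multiplicity-free on V: every eigenspace of Y on V has dimension one. -/
/-- The universal DAHA-module data: four invertible operators `t i` with inverses `s i`,
`t i + s i` central among the `t j`, and `t 0 t 1 t 2 t 3 = q⁻¹`. -/
structure HqMod (F : Type*) [Field F] (q : F) (V : Type*) [AddCommGroup V] [Module F V] where
  t : Fin 4 → Module.End F V
  s : Fin 4 → Module.End F V
  ts : ∀ i, t i * s i = 1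
  st : ∀ i, s i * t i = 1
  central : ∀ i j, Commute (t i + s i) (t j)
  prodEq : t 0 * t 1 * t 2 * t 3 = q⁻¹ • (1 : Module.End F V)

namespace HqMod

variable {F : Type*} [Field F] {q : F} {V : Type*} [AddCommGroup V] [Module F V]

/-- `X = t 3 * t 0`. -/
def X (M : HqMod F q V) : Module.End F V := M.t 3 * M.t 0

/-- `X⁻¹ = t 0 ⁻¹ * t 3 ⁻¹`. -/
def Xinv (M : HqMod F q V) : Module.End F V := M.s 0 * M.s 3

/-- `Y = t 0 * t 1`. -/
def Y (M : HqMod F q V) : Module.End F V := M.t 0 * M.t 1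

/-- `Y⁻¹ = t 1 ⁻¹ * t 0 ⁻¹`. -/
def Yinv (M : HqMod F q V) : Module.End F V := M.s 1 * M.s 0

/-- `G₀ = t 0 - t 3 * t 0 * t 3⁻¹`. -/
def G0 (M : HqMod F q V) : Module.End F V := M.t 0 - M.t 3 * M.t 0 * M.s 3

/-- `G₂ = t 2 - t 1 * t 2 * t 1⁻¹`. -/
def G2 (M : HqMod F q V) : Module.End F V := M.t 2 - M.t 1 * M.t 2 * M.s 1

/-- `A = Y + Y⁻¹`. -/
def A (M : HqMod F q V) : Module.End F V := M.Y + M.Yinv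

/-- `B = X + X⁻¹`. -/
def B (M : HqMod F q V) : Module.End F V := M.X + M.Xinv

/-- Irreducibility: `V ≠ 0` and the only subspaces invariant under all `t i` are `⊥` and `⊤`. -/
def Irreducible (M : HqMod F q V) : Prop :=
  Nontrivial V ∧ ∀ W : Submodule F V, (∀ i, ∀ v ∈ W, M.t i v ∈ W) → W = ⊥ ∨ W = ⊤

/-- `(k 0, k 1, k 2, k 3)` is a parameter sequence: each `k i ≠ 0` and
`t i + t i⁻¹ = (k i + k i⁻¹) • 1`. -/
def IsParamSeq (M : HqMod F q V) (k : Fin 4 → F) : Prop :=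
  ∀ i, k i ≠ 0 ∧ M.t i + M.s i = (k i + (k i)⁻¹) • (1 : Module.End F V)

end HqMod

/-- An endomorphism is diagonalizable when its eigenspaces span. -/
def Diagonalizable {F : Type*} [Field F] {V : Type*} [AddCommGroup V] [Module F V]
    (f : Module.End F V) : Prop :=
  (⨆ μ : F, Module.End.eigenspace f μ) = ⊤

/-- A square matrix is tridiagonal. -/
def IsTridiagonal {F : Type*} [Field F] {n : ℕ} (M : Matrix (Fin n) (Fin n) F) : Prop :=
  ∀ i j : Fin n, 1 < ((i : ℤ) - (j : ℤ)).natAbs → M i j = 0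

/-- A square matrix is irreducible tridiagonal: tridiagonal with nonzero sub- and
superdiagonal entries. -/
def IsIrredTridiagonal {F : Type*} [Field F] {n : ℕ} (M : Matrix (Fin n) (Fin n) F) : Prop :=
  IsTridiagonal M ∧ (∀ i j : Fin n, (i : ℤ) - (j : ℤ) = 1 → M i j ≠ 0) ∧
    (∀ i j : Fin n, (j : ℤ) - (i : ℤ) = 1 → M i j ≠ 0)

/-- A Leonard pair on `V`. -/
def IsLeonardPair {F : Type*} [Field F] {V : Type*} [AddCommGroup V] [Module F V]
    (A As : Module.End F V) : Prop :=
  0 < Module.finrank F V ∧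
  (∃ b : Module.Basis (Fin (Module.finrank F V)) F V,
    IsIrredTridiagonal (LinearMap.toMatrix b b A) ∧ (LinearMap.toMatrix b b As).IsDiag) ∧
  (∃ b : Module.Basis (Fin (Module.finrank F V)) F V,
    IsIrredTridiagonal (LinearMap.toMatrix b b As) ∧ (LinearMap.toMatrix b b A).IsDiag)

/-- `θ_r = a q^{2r-d} + a⁻¹ q^{d-2r}`. -/
noncomputable def thetaSeq {F : Type*} [Field F] (q a : F) (d r : ℕ) : F :=
  a * q ^ (2 * (r : ℤ) - (d : ℤ)) + a⁻¹ * q ^ ((d : ℤ) - 2 * (r : ℤ))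

/-- The first split sequence `φ_r` attached to `(a,b,c,d)`. -/
noncomputable def phiSeq {F : Type*} [Field F] (q a b c : F) (d r : ℕ) : F :=
  a⁻¹ * b⁻¹ * q ^ ((d : ℤ) + 1) * (q ^ (r : ℤ) - q ^ (-(r : ℤ)))
    * (q ^ ((r : ℤ) - (d : ℤ) - 1) - q ^ ((d : ℤ) - (r : ℤ) + 1))
    * (q ^ (-(r : ℤ)) - a * b * c * q ^ ((r : ℤ) - (d : ℤ) - 1))
    * (q ^ (-(r : ℤ)) - a * b * c⁻¹ * q ^ ((r : ℤ) - (d : ℤ) - 1))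

/-- `(a,b,c,d)` is a Huang data of the pair `(A, As)`. -/
def IsHuangData {F : Type*} [Field F] {V : Type*} [AddCommGroup V] [Module F V]
    (q : F) (A As : Module.End F V) (a b c : F) (d : ℕ) : Prop :=
  a ≠ 0 ∧ b ≠ 0 ∧ c ≠ 0 ∧ Module.finrank F V = d + 1 ∧
  (∃ bas : Module.Basis (Fin (d + 1)) F V,
    LinearMap.toMatrix bas bas A = Matrix.of (fun i j : Fin (d + 1) =>
      if (i : ℕ) = (j : ℕ) then thetaSeq q a d (i : ℕ)
      else if (i : ℕ) = (j : ℕ) + 1 then 1 else 0) ∧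
    LinearMap.toMatrix bas bas As = Matrix.of (fun i j : Fin (d + 1) =>
      if (i : ℕ) = (j : ℕ) then thetaSeq q b d (i : ℕ)
      else if (j : ℕ) = (i : ℕ) + 1 then phiSeq q a b c d (j : ℕ) else 0)) ∧
  (∃ bas : Module.Basis (Fin (d + 1)) F V,
    LinearMap.toMatrix bas bas A = Matrix.of (fun i j : Fin (d + 1) =>
      if (i : ℕ) = (j : ℕ) then thetaSeq q a d (d - (i : ℕ))
      else if (i : ℕ) = (j : ℕ) + 1 then 1 else 0) ∧
    LinearMap.toMatrix bas bas As = Matrix.of (fun i j : Fin (d + 1) =>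
      if (i : ℕ) = (j : ℕ) then thetaSeq q b d (i : ℕ)
      else if (j : ℕ) = (i : ℕ) + 1 then phiSeq q a⁻¹ b c d (j : ℕ) else 0))

/-- `G(λ,s,t) = λ⁻²(λ-st)(λ-st⁻¹)(λ-s⁻¹t)(λ-s⁻¹t⁻¹)`. -/
noncomputable def Gfun {F : Type*} [Field F] (lam s t : F) : F :=
  (lam ^ 2)⁻¹ * ((lam - s * t) * (lam - s * t⁻¹) * (lam - s⁻¹ * t) * (lam - s⁻¹ * t⁻¹))




section AuxNum

variable {F : Type*} [Field F]

private lemma qpow_inj {q : F} (hq0 : q ≠ 0)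
    (hqru : ∀ m : ℕ, 1 ≤ m → q ^ m ≠ 1) {a b : ℕ} (h : q ^ a = q ^ b) : a = b := by
  by_contra hne
  rcases Nat.lt_or_ge a b with hab | hab
  · apply hqru (b - a) (by omega)
    have h2 : q ^ a * q ^ (b - a) = q ^ a * 1 := by
      rw [mul_one, ← pow_add, show a + (b - a) = b from by omega, h]
    exact mul_left_cancel₀ (pow_ne_zero _ hq0) h2
  · have hba : b < a := by omega
    apply hqru (a - b) (by omega)
    have h2 : q ^ b * q ^ (a - b) = q ^ b * 1 := by
      rw [mul_one, ← pow_add, show b + (a - b) = a from by omega, ← h]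
    exact mul_left_cancel₀ (pow_ne_zero _ hq0) h2

private lemma sq_eq_one_of (x : F) (hx : x ≠ 0) (h : x⁻¹ - x = 0) : x ^ 2 = 1 := by
  have h1 : x⁻¹ = x := sub_eq_zero.mp h
  have h2 : x * x⁻¹ = 1 := mul_inv_cancel₀ hx
  rw [h1] at h2
  rw [pow_two]
  exact h2

private lemma sq_eq_qinv_of {q : F} (hq0 : q ≠ 0) (x : F) (hx : x ≠ 0)
    (h : q * x - q⁻¹ * x⁻¹ = 0) : x ^ 2 = (q ^ 2)⁻¹ := by
  have h1 : q * x = q⁻¹ * x⁻¹ := sub_eq_zero.mp h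
  have h2 : (q * x) * (q * x) = 1 := by
    calc (q * x) * (q * x) = (q * x) * (q⁻¹ * x⁻¹) := by rw [← h1]
    _ = (q * q⁻¹) * (x * x⁻¹) := by ring
    _ = 1 := by rw [mul_inv_cancel₀ hq0, mul_inv_cancel₀ hx, one_mul]
  have h3 : x ^ 2 * q ^ 2 = 1 := by linear_combination h2
  exact eq_inv_of_mul_eq_one_left h3

/-- The walk of eigenvalues. -/
private noncomputable def nuSeq (q ν0 : F) : ℕ → F := fun j =>
  if Even j then q ^ j * ν0 else (q ^ (j + 1))⁻¹ * ν0⁻¹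

private lemma nuSeq_ne_zero {q : F} (hq0 : q ≠ 0) {x : F} (hx : x ≠ 0) (j : ℕ) :
    nuSeq q x j ≠ 0 := by
  unfold nuSeq; split
  · exact mul_ne_zero (pow_ne_zero _ hq0) hx
  · exact mul_ne_zero (inv_ne_zero (pow_ne_zero _ hq0)) (inv_ne_zero hx)

private lemma nuSeq_zero (q x : F) : nuSeq q x 0 = x := by
  simp [nuSeq]

private lemma nuSeq_succ_even {q x : F} {j : ℕ} (hj : Even j) :
    nuSeq q x (j + 1) = (q ^ 2 * nuSeq q x j)⁻¹ := by
  have hj1 : ¬ Even (j + 1) := by simp [Nat.even_add_one, hj]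
  simp only [nuSeq, if_pos hj, if_neg hj1]
  rw [show j + 1 + 1 = j + 2 from rfl, pow_add, mul_inv, mul_inv, mul_inv]
  ring

private lemma nuSeq_succ_odd {q x : F} {j : ℕ} (hj : ¬ Even j) :
    nuSeq q x (j + 1) = (nuSeq q x j)⁻¹ := by
  have hj1 : Even (j + 1) := Nat.even_add_one.mpr hj
  simp only [nuSeq, if_pos hj1, if_neg hj]
  rw [mul_inv, inv_inv, inv_inv]

private lemma collision_rel {q x : F} (hq0 : q ≠ 0) (hx0 : x ≠ 0) {m n : ℕ}
    (hm : Even m) (hn : ¬ Even n) (h : nuSeq q x m = nuSeq q x n) :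
    x ^ 2 * q ^ (m + n + 1) = 1 := by
  simp only [nuSeq, if_pos hm, if_neg hn] at h
  have h2 := congrArg (fun y => y * (q ^ (n + 1) * x)) h
  calc x ^ 2 * q ^ (m + n + 1) = q ^ m * x * (q ^ (n + 1) * x) := by
        rw [show m + n + 1 = m + (n + 1) from by omega, pow_add]; ring
  _ = (q ^ (n + 1))⁻¹ * x⁻¹ * (q ^ (n + 1) * x) := h2
  _ = 1 := by field_simp

/-- For mixed-parity collisions there is an intermediate "loop" vertex. -/
private lemma fold_mid {q x : F} (hq0 : q ≠ 0) (hx0 : x ≠ 0) {m n : ℕ} (hmn : m < n)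
    (hodd : ¬ Even (m + n)) (hrel : x ^ 2 * q ^ (m + n + 1) = 1) :
    ∃ c, m ≤ c ∧ c < n ∧ ((nuSeq q x c) ^ 2 = 1 ∨ (nuSeq q x c) ^ 2 = (q ^ 2)⁻¹) := by
  obtain ⟨c, hc⟩ := Nat.not_even_iff_odd.mp hodd
  -- hc : m + n = 2 * c + 1
  refine ⟨c, by omega, by omega, ?_⟩
  rcases Nat.even_or_odd c with he | ho
  · right
    have e : (nuSeq q x c) ^ 2 = q ^ (c + c) * x ^ 2 := by
      simp only [nuSeq, if_pos he]; rw [mul_pow, pow_add, sq]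
    rw [e]
    have h1 : q ^ (c + c) * x ^ 2 * q ^ 2 = 1 := by
      calc q ^ (c + c) * x ^ 2 * q ^ 2 = x ^ 2 * q ^ (m + n + 1) := by
            rw [show m + n + 1 = (c + c) + 2 from by omega, pow_add]; ring
      _ = 1 := hrel
    exact eq_inv_of_mul_eq_one_left h1
  · left
    have hoe : ¬ Even c := Nat.not_even_iff_odd.mpr ho
    have key : (q ^ (c + 1) * x) * ((q ^ (c + 1))⁻¹ * x⁻¹) = 1 := by
      field_simp
    have e : (nuSeq q x c) ^ 2 * (x ^ 2 * q ^ (m + n + 1)) = 1 := by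
      simp only [nuSeq, if_neg hoe]
      rw [show m + n + 1 = (c + 1) + (c + 1) from by omega]
      calc ((q ^ (c + 1))⁻¹ * x⁻¹) ^ 2 * (x ^ 2 * q ^ ((c + 1) + (c + 1)))
          = ((q ^ (c + 1) * x) * ((q ^ (c + 1))⁻¹ * x⁻¹)) ^ 2 := by ring
      _ = 1 := by rw [key, one_pow]
    rw [hrel, mul_one] at e
    exact e

/-- Analysis of a collision in the walk. -/
private lemma nuSeq_collision {q x : F} (hq0 : q ≠ 0)
    (hqru : ∀ m : ℕ, 1 ≤ m → q ^ m ≠ 1) (hx0 : x ≠ 0) {m n : ℕ} (hmn : m < n)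
    (h : nuSeq q x m = nuSeq q x n) :
    ¬ Even (m + n) ∧ x ^ 2 * q ^ (m + n + 1) = 1 := by
  by_cases hpar : Even (m + n)
  · exfalso
    rcases Nat.even_or_odd m with hm | hm
    · have hn : Even n := (Nat.even_add.mp hpar).mp hm
      have h' : q ^ m * x = q ^ n * x := by simpa [nuSeq, if_pos hm, if_pos hn] using h
      have := qpow_inj hq0 hqru (mul_right_cancel₀ hx0 h')
      omega
    · have hm' : ¬ Even m := Nat.not_even_iff_odd.mpr hm
      have hn : ¬ Even n := fun hn => hm' ((Nat.even_add.mp hpar).mpr hn)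
      have h' : (q ^ (m + 1))⁻¹ * x⁻¹ = (q ^ (n + 1))⁻¹ * x⁻¹ := by
        simpa [nuSeq, if_neg hm', if_neg hn] using h
      have h'' := mul_right_cancel₀ (inv_ne_zero hx0) h'
      have := qpow_inj hq0 hqru (inv_inj.mp h'')
      omega
  · refine ⟨hpar, ?_⟩
    rcases Nat.even_or_odd m with hm | hm
    · have hn : ¬ Even n := fun hn => hpar (Nat.even_add.mpr (iff_of_true hm hn))
      exact collision_rel hq0 hx0 hm hn h
    · have hm' : ¬ Even m := Nat.not_even_iff_odd.mpr hm
      have hn : Even n := by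
        by_contra hn
        exact hpar (Nat.even_add.mpr (iff_of_false hm' hn))
      have hrel' : x ^ 2 * q ^ (n + m + 1) = 1 := collision_rel hq0 hx0 hn hm' h.symm
      rw [show m + n + 1 = n + m + 1 from by omega]
      exact hrel'

end AuxNum

section CountAux

variable {F : Type*} [Field F] {V : Type*} [AddCommGroup V] [Module F V]

/-- Dimension count: if eigenvectors `w j` (for eigenvalues `ν j`, with no repeats on the
support) span `V`, then every eigenspace has dimension at most 1. -/
private lemma count_aux [FiniteDimensional F V] (f : Module.End F V) (ν : ℕ → F) (w : ℕ → V)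
    (hw : ∀ j, f (w j) = ν j • w j)
    (hu : ∀ m n : ℕ, m < n → ν m = ν n → w n = 0)
    (htop : (⨆ j, Submodule.span F {w j}) = ⊤) (μ : F) :
    Module.finrank F (Module.End.eigenspace f μ) ≤ 1 := by
  classical
  set Z : Submodule F V := ⨆ x : F, ⨆ _ : x ≠ μ, Module.End.eigenspace f x with hZ
  have hdisj : Disjoint (Module.End.eigenspace f μ) Z :=
    (iSupIndep_def.mp f.eigenspaces_iSupIndep) μ
  by_cases hex : ∃ j, ν j = μ ∧ w j ≠ 0
  · obtain ⟨j0, hj0ν, hj0w⟩ := hex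
    have hspan : Submodule.span F {w j0} ≤ Module.End.eigenspace f μ := by
      rw [Submodule.span_le, Set.singleton_subset_iff]
      exact Module.End.mem_eigenspace_iff.mpr (by rw [hw j0, hj0ν])
    have hothers : ∀ j, j ≠ j0 → Submodule.span F {w j} ≤ Z := by
      intro j hj
      by_cases hz : w j = 0
      · rw [hz, Submodule.span_zero_singleton]; exact bot_le
      · have hν : ν j ≠ μ := by
          intro hνj
          rcases lt_trichotomy j j0 with h | h | h
          · exact hj0w (hu j j0 h (hνj.trans hj0ν.symm))
          · exact hj h
          · exact hz (hu j0 j h (hj0ν.trans hνj.symm))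
        have h1 : Submodule.span F {w j} ≤ Module.End.eigenspace f (ν j) := by
          rw [Submodule.span_le, Set.singleton_subset_iff]
          exact Module.End.mem_eigenspace_iff.mpr (hw j)
        exact h1.trans (le_iSup₂ (f := fun x (_ : x ≠ μ) => Module.End.eigenspace f x) (ν j) hν)
    have hkey : Module.End.eigenspace f μ ≤ Submodule.span F {w j0} := by
      have h1 : (⊤ : Submodule F V) ≤ Submodule.span F {w j0} ⊔ Z := by
        rw [← htop]
        refine iSup_le fun j => ?_
        by_cases hj : j = j0
        · subst hj; exact le_sup_left
        · exact (hothers j hj).trans le_sup_right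
      have h2 : Module.End.eigenspace f μ ≤
          (Submodule.span F {w j0} ⊔ Z) ⊓ Module.End.eigenspace f μ :=
        le_inf (le_trans le_top h1) le_rfl
      rwa [sup_inf_assoc_of_le _ hspan, hdisj.symm.eq_bot, sup_bot_eq] at h2
    calc Module.finrank F (Module.End.eigenspace f μ)
        ≤ Module.finrank F (Submodule.span F {w j0}) := Submodule.finrank_mono hkey
    _ = 1 := finrank_span_singleton hj0w
  · push_neg at hex
    have h1 : (⊤ : Submodule F V) ≤ Z := by
      rw [← htop]
      refine iSup_le fun j => ?_
      by_cases hz : w j = 0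
      · rw [hz, Submodule.span_zero_singleton]; exact bot_le
      · have hν : ν j ≠ μ := fun h => hz (hex j h)
        have hle : Submodule.span F {w j} ≤ Module.End.eigenspace f (ν j) := by
          rw [Submodule.span_le, Set.singleton_subset_iff]
          exact Module.End.mem_eigenspace_iff.mpr (hw j)
        exact hle.trans (le_iSup₂ (f := fun x (_ : x ≠ μ) => Module.End.eigenspace f x) (ν j) hν)
    have hbot : Module.End.eigenspace f μ = ⊥ :=
      le_bot_iff.mp (by rw [← hdisj.eq_bot]; exact le_inf le_rfl (le_trans le_top h1))
    rw [hbot, finrank_bot]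
    omega

end CountAux

/-- The essential data extracted from an irreducible `HqMod`:
the operators `Y`, `Y⁻¹`, `t 1`, `t 3`, the Schur scalars `k i`, the quadratic relations,
the two Bernstein-type relations, and irreducibility. -/
private structure CoreData (F : Type*) [Field F] (q : F) (V : Type*) [AddCommGroup V]
    [Module F V] where
  Y : Module.End F V
  Yi : Module.End F V
  t1 : Module.End F V
  t3 : Module.End F V
  k0 : F
  k1 : F
  k2 : F
  k3 : F
  hYYi : Y * Yi = 1
  hYiY : Yi * Y = 1
  ht1 : t1 * t1 = k1 • t1 - 1
  ht3 : t3 * t3 = k3 • t3 - 1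
  star1 : t1 * Yi - Y * t1 = k0 • (1 : Module.End F V) - k1 • Y
  star3 : q • (t3 * Y) - q⁻¹ • (Yi * t3) = k2 • (1 : Module.End F V) - (k3 * q⁻¹) • Yi
  hirr : ∀ W : Submodule F V, (∀ v ∈ W, Y v ∈ W) → (∀ v ∈ W, Yi v ∈ W) →
      (∀ v ∈ W, t1 v ∈ W) → (∀ v ∈ W, t3 v ∈ W) → W = ⊥ ∨ W = ⊤

namespace CoreData

variable {F : Type*} [Field F] {q : F} {V : Type*} [AddCommGroup V] [Module F V]
variable (C : CoreData F q V)

private lemma Yi_Y_apply (v : V) : C.Yi (C.Y v) = v := by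
  rw [← Module.End.mul_apply, C.hYiY, Module.End.one_apply]

private lemma Y_Yi_apply (v : V) : C.Y (C.Yi v) = v := by
  rw [← Module.End.mul_apply, C.hYYi, Module.End.one_apply]

private lemma Yi_eq {a : F} {v : V} (ha : a ≠ 0) (h : C.Y v = a • v) : C.Yi v = a⁻¹ • v := by
  have h1 : a • C.Yi v = v := by rw [← map_smul, ← h, C.Yi_Y_apply]
  calc C.Yi v = a⁻¹ • (a • C.Yi v) := by rw [smul_smul, inv_mul_cancel₀ ha, one_smul]
  _ = a⁻¹ • v := by rw [h1]

private lemma Y_eq {a : F} {v : V} (ha : a ≠ 0) (h : C.Yi v = a • v) : C.Y v = a⁻¹ • v := by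
  have h1 : a • C.Y v = v := by rw [← map_smul, ← h, C.Y_Yi_apply]
  calc C.Y v = a⁻¹ • (a • C.Y v) := by rw [smul_smul, inv_mul_cancel₀ ha, one_smul]
  _ = a⁻¹ • v := by rw [h1]

private lemma eig_zero : Module.End.eigenspace C.Y 0 = ⊥ := by
  ext v
  simp only [Module.End.mem_eigenspace_iff, zero_smul, Submodule.mem_bot]
  constructor
  · intro h
    have h2 := congrArg (fun x => C.Yi x) h
    simpa [C.Yi_Y_apply, map_zero] using h2
  · intro h; rw [h, map_zero]

private lemma t1_sq_apply (v : V) : C.t1 (C.t1 v) = C.k1 • C.t1 v - v := by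
  have h := LinearMap.ext_iff.mp C.ht1 v
  simpa [Module.End.mul_apply, LinearMap.sub_apply, LinearMap.smul_apply,
    Module.End.one_apply] using h

private lemma t3_sq_apply (v : V) : C.t3 (C.t3 v) = C.k3 • C.t3 v - v := by
  have h := LinearMap.ext_iff.mp C.ht3 v
  simpa [Module.End.mul_apply, LinearMap.sub_apply, LinearMap.smul_apply,
    Module.End.one_apply] using h

/-- The `t1`-shift: from the Bernstein relation, `t1 v - c • v` is a `Y`-eigenvector with
eigenvalue `ν⁻¹` whenever `Y v = ν • v`. -/
private lemma E_shift {ν c : F} {v : V} (hν : ν ≠ 0)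
    (hc : c * (ν⁻¹ - ν) = C.k0 - C.k1 * ν) (hv : C.Y v = ν • v) :
    C.Y (C.t1 v - c • v) = ν⁻¹ • (C.t1 v - c • v) := by
  have hYi := C.Yi_eq hν hv
  have hstar := LinearMap.ext_iff.mp C.star1 v
  simp only [LinearMap.sub_apply, Module.End.mul_apply, LinearMap.smul_apply,
    Module.End.one_apply] at hstar
  rw [hYi, hv, map_smul] at hstar
  -- hstar : C.t1 (ν⁻¹ • v) ... became ν⁻¹ • C.t1 v - C.Y (C.t1 v) = k0 • v - k1 • ν • v
  have hY1 : C.Y (C.t1 v) = ν⁻¹ • C.t1 v - (C.k0 • v - C.k1 • ν • v) := by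
    rw [← hstar]; abel
  rw [map_sub, map_smul, hv, hY1]
  match_scalars
  · ring
  · linear_combination hc

/-- The `t3`-shift: `t3 v - c • v` is a `Y`-eigenvector with eigenvalue `(q² ν)⁻¹`. -/
private lemma A_shift (hq0 : q ≠ 0) {ν c : F} {v : V} (hν : ν ≠ 0)
    (hc : c * (q * ν - q⁻¹ * ν⁻¹) = C.k2 - C.k3 * q⁻¹ * ν⁻¹) (hv : C.Y v = ν • v) :
    C.Y (C.t3 v - c • v) = (q ^ 2 * ν)⁻¹ • (C.t3 v - c • v) := by
  have hq1 : q * q⁻¹ = 1 := mul_inv_cancel₀ hq0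
  have hYi := C.Yi_eq hν hv
  have hstar := LinearMap.ext_iff.mp C.star3 v
  simp only [LinearMap.sub_apply, LinearMap.smul_apply, Module.End.mul_apply,
    Module.End.one_apply] at hstar
  rw [hv, map_smul, hYi] at hstar
  -- hstar : q • ν • C.t3 v - q⁻¹ • C.Yi (C.t3 v) = k2 • v - (k3 * q⁻¹) • ν⁻¹ • v
  have hYit3 : C.Yi (C.t3 v) = (q ^ 2 * ν) • C.t3 v - (q * C.k2) • v + (C.k3 * ν⁻¹) • v := by
    have h2 : C.Yi (C.t3 v) = q • q⁻¹ • C.Yi (C.t3 v) := by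
      rw [smul_smul, hq1, one_smul]
    have h3 : q⁻¹ • C.Yi (C.t3 v) =
        q • ν • C.t3 v - (C.k2 • v - (C.k3 * q⁻¹) • ν⁻¹ • v) := by
      rw [← hstar]; abel
    rw [h2, h3]
    match_scalars
    · ring
    · linear_combination (C.k3 * ν⁻¹) * hq1
  have hYiu : C.Yi (C.t3 v - c • v) = (q ^ 2 * ν) • (C.t3 v - c • v) := by
    rw [map_sub, map_smul, hYi, hYit3]
    match_scalars
    · ring
    · linear_combination q * hc + (c * ν⁻¹ - C.k3 * ν⁻¹) * hq1
  have h4 := C.Y_eq (mul_ne_zero (pow_ne_zero 2 hq0) hν) hYiu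
  exact h4

end CoreData

namespace CoreData

variable {F : Type*} [Field F] {q : F} {V : Type*} [AddCommGroup V] [Module F V]

/-- The scalar sequence along the walk. -/
private noncomputable def cseq (C : CoreData F q V) (x : F) : ℕ → F := fun j =>
  if Even j then
    (C.k2 - C.k3 * q⁻¹ * (nuSeq q x j)⁻¹) / (q * nuSeq q x j - q⁻¹ * (nuSeq q x j)⁻¹)
  else (C.k0 - C.k1 * nuSeq q x j) / ((nuSeq q x j)⁻¹ - nuSeq q x j)

/-- The vector sequence along the walk. -/
private noncomputable def wseq (C : CoreData F q V) (x : F) (w0 : V) : ℕ → V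
  | 0 => w0
  | (i + 1) => (if Even i then C.t3 (wseq C x w0 i) else C.t1 (wseq C x w0 i))
      - cseq C x i • wseq C x w0 i

/-- The main walk lemma: a seed eigenvector at one end of the eigenvalue chain, whose line is
`t1`-stable, forces all eigenspaces to be at most one-dimensional. -/
private theorem walk [FiniteDimensional F V] (C : CoreData F q V)
    (hq0 : q ≠ 0) {x lam : F} {w0 : V} (hw0 : w0 ≠ 0) (hx0 : x ≠ 0)
    (hseed : C.Y w0 = x • w0) (hseed1 : C.t1 w0 = lam • w0)
    (Hden : ∀ j : ℕ, (if Even j then q * nuSeq q x j - q⁻¹ * (nuSeq q x j)⁻¹ ≠ 0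
        else (nuSeq q x j)⁻¹ - nuSeq q x j ≠ 0) ∨
        Module.End.eigenspace C.Y (nuSeq q x j) = ⊥)
    (Huniq : ∀ m n : ℕ, m < n → nuSeq q x m = nuSeq q x n →
        ∃ c : ℕ, m ≤ c ∧ c < n ∧ Module.End.eigenspace C.Y (nuSeq q x c) = ⊥)
    (μ : F) : Module.finrank F (Module.End.eigenspace C.Y μ) ≤ 1 := by
  classical
  set w : ℕ → V := wseq C x w0 with hwdef
  have hwrec : ∀ i, w (i + 1) =
      (if Even i then C.t3 (w i) else C.t1 (w i)) - cseq C x i • w i := fun i => rfl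
  have hw00 : w 0 = w0 := rfl
  -- eigen equations
  have hweig : ∀ j, C.Y (w j) = nuSeq q x j • w j := by
    intro j
    induction j with
    | zero => rw [hw00, nuSeq_zero]; exact hseed
    | succ i ih =>
      by_cases hzi : w i = 0
      · rw [hwrec, hzi]
        simp
      · have hden : (if Even i then q * nuSeq q x i - q⁻¹ * (nuSeq q x i)⁻¹ ≠ 0
            else (nuSeq q x i)⁻¹ - nuSeq q x i ≠ 0) := by
          rcases Hden i with h | h
          · exact h
          · exfalso
            apply hzi
            have hmem := Module.End.mem_eigenspace_iff.mpr ih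
            rwa [h, Submodule.mem_bot] at hmem
        rcases Nat.even_or_odd i with he | ho
        · rw [if_pos he] at hden
          have hcs : cseq C x i = (C.k2 - C.k3 * q⁻¹ * (nuSeq q x i)⁻¹) /
              (q * nuSeq q x i - q⁻¹ * (nuSeq q x i)⁻¹) := by
            simp only [cseq, if_pos he]
          have hc : cseq C x i * (q * nuSeq q x i - q⁻¹ * (nuSeq q x i)⁻¹) =
              C.k2 - C.k3 * q⁻¹ * (nuSeq q x i)⁻¹ := by
            rw [hcs]; exact div_mul_cancel₀ _ hden
          have heq : w (i + 1) = C.t3 (w i) - cseq C x i • w i := by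
            rw [hwrec, if_pos he]
          have h2 := C.A_shift hq0 (nuSeq_ne_zero hq0 hx0 i) hc ih
          rw [← heq] at h2
          rw [nuSeq_succ_even he]
          exact h2
        · have ho' : ¬ Even i := Nat.not_even_iff_odd.mpr ho
          rw [if_neg ho'] at hden
          have hcs : cseq C x i = (C.k0 - C.k1 * nuSeq q x i) /
              ((nuSeq q x i)⁻¹ - nuSeq q x i) := by
            simp only [cseq, if_neg ho']
          have hc : cseq C x i * ((nuSeq q x i)⁻¹ - nuSeq q x i) =
              C.k0 - C.k1 * nuSeq q x i := by
            rw [hcs]; exact div_mul_cancel₀ _ hden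
          have heq : w (i + 1) = C.t1 (w i) - cseq C x i • w i := by
            rw [hwrec, if_neg ho']
          have h2 := C.E_shift (nuSeq_ne_zero hq0 hx0 i) hc ih
          rw [← heq] at h2
          rw [nuSeq_succ_odd ho']
          exact h2
  -- vanishing propagates
  have hzero_succ : ∀ i, w i = 0 → w (i + 1) = 0 := by
    intro i hi
    rw [hwrec, hi]
    simp
  have hzero : ∀ i k, i ≤ k → w i = 0 → w k = 0 := by
    intro i k hik hi
    induction k, hik using Nat.le_induction with
    | base => exact hi
    | succ n hn ih => exact hzero_succ n ih
  -- the invariant subspace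
  set U : Submodule F V := ⨆ j, Submodule.span F {w j} with hU
  have hmemU : ∀ j, w j ∈ U :=
    fun j => Submodule.mem_iSup_of_mem j (Submodule.mem_span_singleton_self _)
  have hstep : ∀ G : Module.End F V, (∀ j, G (w j) ∈ U) → ∀ v ∈ U, G v ∈ U := by
    intro G hG v hv
    refine Submodule.iSup_induction (motive := fun y => G y ∈ U) _ hv ?_ ?_ ?_
    · intro j y hy
      obtain ⟨a, rfl⟩ := Submodule.mem_span_singleton.mp hy
      show G (a • w j) ∈ U
      rw [map_smul]
      exact Submodule.smul_mem _ _ (hG j)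
    · show G 0 ∈ U
      rw [map_zero]; exact Submodule.zero_mem _
    · intro y z hy hz
      show G (y + z) ∈ U
      rw [map_add]; exact Submodule.add_mem _ hy hz
  have hYU : ∀ j, C.Y (w j) ∈ U := fun j => by
    rw [hweig j]; exact Submodule.smul_mem _ _ (hmemU j)
  have hYiU : ∀ j, C.Yi (w j) ∈ U := fun j => by
    by_cases hz : w j = 0
    · rw [hz, map_zero]; exact Submodule.zero_mem _
    · rw [C.Yi_eq (nuSeq_ne_zero hq0 hx0 j) (hweig j)]
      exact Submodule.smul_mem _ _ (hmemU j)
  have ht3U : ∀ j, C.t3 (w j) ∈ U := by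
    intro j
    rcases Nat.even_or_odd j with he | ho
    · have h1 : C.t3 (w j) = w (j + 1) + cseq C x j • w j := by
        rw [hwrec, if_pos he]; abel
      rw [h1]
      exact Submodule.add_mem _ (hmemU _) (Submodule.smul_mem _ _ (hmemU _))
    · obtain ⟨i, rfl⟩ : ∃ i, j = i + 1 := by
        rcases ho with ⟨m, hm⟩; exact ⟨2 * m, by omega⟩
      have hei : Even i := by
        rcases ho with ⟨m, hm⟩
        exact ⟨m, by omega⟩
      have h0 : w (i + 1) = C.t3 (w i) - cseq C x i • w i := by rw [hwrec, if_pos hei]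
      have h2 : C.t3 (w i) = w (i + 1) + cseq C x i • w i := by rw [h0]; abel
      have h1 : C.t3 (w (i + 1)) = (C.k3 - cseq C x i) • C.t3 (w i) - w i := by
        rw [h0, map_sub, map_smul, C.t3_sq_apply]
        match_scalars <;> ring
      rw [h1, h2]
      refine Submodule.sub_mem _ (Submodule.smul_mem _ _ ?_) (hmemU _)
      exact Submodule.add_mem _ (hmemU _) (Submodule.smul_mem _ _ (hmemU _))
  have ht1U : ∀ j, C.t1 (w j) ∈ U := by
    intro j
    rcases Nat.even_or_odd j with he | ho
    · rcases Nat.eq_zero_or_pos j with rfl | hpos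
      · rw [hw00, hseed1]
        exact Submodule.smul_mem _ _ (hmemU 0)
      · obtain ⟨i, rfl⟩ : ∃ i, j = i + 1 := ⟨j - 1, by omega⟩
        have hoi : ¬ Even i := by
          intro hei
          rw [Nat.even_add_one] at he
          exact he hei
        have h0 : w (i + 1) = C.t1 (w i) - cseq C x i • w i := by rw [hwrec, if_neg hoi]
        have h2 : C.t1 (w i) = w (i + 1) + cseq C x i • w i := by rw [h0]; abel
        have h1 : C.t1 (w (i + 1)) = (C.k1 - cseq C x i) • C.t1 (w i) - w i := by
          rw [h0, map_sub, map_smul, C.t1_sq_apply]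
          match_scalars <;> ring
        rw [h1, h2]
        refine Submodule.sub_mem _ (Submodule.smul_mem _ _ ?_) (hmemU _)
        exact Submodule.add_mem _ (hmemU _) (Submodule.smul_mem _ _ (hmemU _))
    · have ho' : ¬ Even j := Nat.not_even_iff_odd.mpr ho
      have h1 : C.t1 (w j) = w (j + 1) + cseq C x j • w j := by
        rw [hwrec, if_neg ho']; abel
      rw [h1]
      exact Submodule.add_mem _ (hmemU _) (Submodule.smul_mem _ _ (hmemU _))
  have hUtop : U = ⊤ := by
    rcases C.hirr U (hstep _ hYU) (hstep _ hYiU) (hstep _ ht1U) (hstep _ ht3U) with h | h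
    · exfalso
      have := hmemU 0
      rw [h, Submodule.mem_bot, hw00] at this
      exact hw0 this
    · exact h
  have hu : ∀ m n : ℕ, m < n → nuSeq q x m = nuSeq q x n → w n = 0 := by
    intro m n hmn hcol
    obtain ⟨c, hc1, hc2, hc3⟩ := Huniq m n hmn hcol
    have hwc : w c = 0 := by
      have hmem := Module.End.mem_eigenspace_iff.mpr (hweig c)
      rwa [hc3, Submodule.mem_bot] at hmem
    exact hzero c n (le_of_lt hc2) hwc
  exact count_aux C.Y (nuSeq q x) w hweig hu hUtop μ

end CoreData

namespace CoreData

variable {F : Type*} [Field F] {q : F} {V : Type*} [AddCommGroup V] [Module F V]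
variable (C : CoreData F q V)

/-- `t1` commutes with `Y + Y⁻¹`. -/
private lemma comm1 : C.t1 * (C.Y + C.Yi) = (C.Y + C.Yi) * C.t1 := by
  have e1 : (C.t1 * C.Yi - C.Y * C.t1) * C.Y = C.t1 - C.Y * (C.t1 * C.Y) := by
    rw [sub_mul, mul_assoc C.t1 C.Yi C.Y, C.hYiY, mul_one, mul_assoc]
  have e2 : C.Yi * (C.t1 - C.Y * (C.t1 * C.Y)) = C.Yi * C.t1 - C.t1 * C.Y := by
    rw [mul_sub, ← mul_assoc C.Yi C.Y (C.t1 * C.Y), C.hYiY, one_mul]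
  have e3 : C.Yi * ((C.k0 • (1 : Module.End F V) - C.k1 • C.Y) * C.Y) =
      C.k0 • (1 : Module.End F V) - C.k1 • C.Y := by
    rw [sub_mul, smul_mul_assoc, one_mul, smul_mul_assoc, mul_sub, mul_smul_comm,
      mul_smul_comm, C.hYiY, ← mul_assoc, C.hYiY, one_mul]
  have h2 : C.Yi * C.t1 - C.t1 * C.Y = C.k0 • (1 : Module.End F V) - C.k1 • C.Y := by
    calc C.Yi * C.t1 - C.t1 * C.Y = C.Yi * ((C.t1 * C.Yi - C.Y * C.t1) * C.Y) := by
          rw [e1, e2]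
    _ = C.Yi * ((C.k0 • (1 : Module.End F V) - C.k1 • C.Y) * C.Y) := by rw [C.star1]
    _ = C.k0 • (1 : Module.End F V) - C.k1 • C.Y := e3
  have a1 : C.t1 * C.Yi = C.Y * C.t1 + (C.k0 • (1 : Module.End F V) - C.k1 • C.Y) := by
    rw [← C.star1]; abel
  have a2 : C.Yi * C.t1 = C.t1 * C.Y + (C.k0 • (1 : Module.End F V) - C.k1 • C.Y) := by
    rw [← h2]; abel
  rw [mul_add, add_mul, a1, a2]
  abel

/-- At a loop vertex `l = ±1`, the eigenspace of `Y` for `l` is `t1`-stable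
(here diagonalizability of `Y` is used). -/
private lemma loop_stable (hY : (⨆ z : F, Module.End.eigenspace C.Y z) = ⊤)
    {l : F} (hl : l ^ 2 = 1) :
    ∀ v ∈ Module.End.eigenspace C.Y l, C.t1 v ∈ Module.End.eigenspace C.Y l := by
  have hl0 : l ≠ 0 := by
    intro h; rw [h] at hl; norm_num at hl
  have hli : l⁻¹ = l := by
    have h1 : l * l = 1 := by rw [← pow_two]; exact hl
    exact inv_eq_of_mul_eq_one_right h1
  intro v hv
  rw [Module.End.mem_eigenspace_iff] at hv ⊢
  have hYiv : C.Yi v = l • v := by rw [C.Yi_eq hl0 hv, hli]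
  set u := C.t1 v with hu
  -- (Y + Yi) u = 2l • u
  have hAu : C.Y u + C.Yi u = (2 * l) • u := by
    have h := LinearMap.ext_iff.mp C.comm1 v
    simp only [Module.End.mul_apply, LinearMap.add_apply] at h
    -- h : C.t1 (C.Y v + C.Yi v) = C.Y (C.t1 v) + C.Yi (C.t1 v)
    rw [hv, hYiv, ← two_smul F (l • v), smul_smul, map_smul] at h
    exact h.symm
  -- z := Y u - l • u is an eigenvector for l
  have hz : C.Y (C.Y u - l • u) = l • (C.Y u - l • u) := by
    have h4 := congrArg (fun y => C.Y y) hAu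
    simp only [map_add, map_smul, C.Y_Yi_apply] at h4
    -- h4 : C.Y (C.Y u) + u = (2 * l) • C.Y u
    have h5 : C.Y (C.Y u) = (2 * l) • C.Y u - u := by rw [← h4]; abel
    rw [map_sub, map_smul, h5]
    match_scalars
    · ring
    · linear_combination hl
  -- z lies in the sum of the other eigenspaces
  have hzmem : C.Y u - l • u ∈
      (⨆ z : F, ⨆ _ : z ≠ l, Module.End.eigenspace C.Y z) := by
    have hu_top : u ∈ (⊤ : Submodule F V) := Submodule.mem_top
    rw [← hY] at hu_top
    refine Submodule.iSup_induction
      (motive := fun y => C.Y y - l • y ∈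
        (⨆ z : F, ⨆ _ : z ≠ l, Module.End.eigenspace C.Y z)) _ hu_top ?_ ?_ ?_
    · intro z y hy
      show C.Y y - l • y ∈ _
      have hy' := Module.End.mem_eigenspace_iff.mp hy
      by_cases hzl : z = l
      · subst hzl
        rw [hy', sub_self]
        exact Submodule.zero_mem _
      · have he : C.Y y - l • y = (z - l) • y := by rw [hy', sub_smul]
        rw [he]
        exact Submodule.smul_mem _ _
          (Submodule.mem_iSup_of_mem z (Submodule.mem_iSup_of_mem hzl hy))
    · show C.Y 0 - l • 0 ∈ _
      rw [map_zero, smul_zero, sub_zero]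
      exact Submodule.zero_mem _
    · intro y z hy hz
      show C.Y (y + z) - l • (y + z) ∈ _
      have he : C.Y (y + z) - l • (y + z) = (C.Y y - l • y) + (C.Y z - l • z) := by
        rw [map_add, smul_add]; abel
      rw [he]
      exact Submodule.add_mem _ hy hz
  have hdisj : Disjoint (Module.End.eigenspace C.Y l)
      (⨆ z : F, ⨆ _ : z ≠ l, Module.End.eigenspace C.Y z) :=
    (iSupIndep_def.mp C.Y.eigenspaces_iSupIndep) l
  have hz0 : C.Y u - l • u = 0 := by
    have hmem : C.Y u - l • u ∈ Module.End.eigenspace C.Y l ⊓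
        (⨆ z : F, ⨆ _ : z ≠ l, Module.End.eigenspace C.Y z) :=
      ⟨Module.End.mem_eigenspace_iff.mpr hz, hzmem⟩
    rwa [hdisj.eq_bot, Submodule.mem_bot] at hmem
  rwa [sub_eq_zero] at hz0

end CoreData

namespace CoreData

variable {F : Type*} [Field F] {q : F} {V : Type*} [AddCommGroup V] [Module F V]

/-- Multiplicity-freeness when `Y` has an eigenvalue `l` with `l² = 1` (loop seed). -/
private theorem loop_seed [FiniteDimensional F V] [IsAlgClosed F] (C : CoreData F q V)
    (hq0 : q ≠ 0) (hqru : ∀ m : ℕ, 1 ≤ m → q ^ m ≠ 1)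
    (hY : (⨆ z : F, Module.End.eigenspace C.Y z) = ⊤)
    {l : F} (hl : l ^ 2 = 1) (hne : Module.End.eigenspace C.Y l ≠ ⊥) (μ : F) :
    Module.finrank F (Module.End.eigenspace C.Y μ) ≤ 1 := by
  have hl0 : l ≠ 0 := by intro h; rw [h] at hl; norm_num at hl
  have hstab := C.loop_stable hY hl
  haveI : Nontrivial (Module.End.eigenspace C.Y l) :=
    Submodule.nontrivial_iff_ne_bot.mpr hne
  obtain ⟨lam, hlam⟩ := Module.End.exists_eigenvalue (LinearMap.restrict C.t1 hstab)
  obtain ⟨w', hw'⟩ := hlam.exists_hasEigenvector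
  have hw'0 : (w' : V) ≠ 0 := fun h => hw'.right (Subtype.ext h)
  have hseed : C.Y (w' : V) = l • (w' : V) := Module.End.mem_eigenspace_iff.mp w'.2
  have hseed1 : C.t1 (w' : V) = lam • (w' : V) := by
    have h1 := hw'.apply_eq_smul
    have h2 := congrArg (Subtype.val) h1
    simpa [LinearMap.restrict_apply] using h2
  refine C.walk hq0 hw'0 hl0 hseed hseed1 ?_ ?_ μ
  · -- Hden : denominators never vanish on the walk from l
    intro j
    left
    rcases Nat.even_or_odd j with he | ho
    · rw [if_pos he]
      intro hd0
      have hsq : (nuSeq q l j) ^ 2 = (q ^ 2)⁻¹ :=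
        sq_eq_qinv_of hq0 _ (nuSeq_ne_zero hq0 hl0 j) hd0
      have e : (nuSeq q l j) ^ 2 = q ^ (j + j) := by
        simp only [nuSeq, if_pos he]
        rw [mul_pow, pow_add, sq, hl, mul_one]
      rw [e] at hsq
      apply hqru (j + j + 2) (by omega)
      rw [pow_add, hsq]
      exact inv_mul_cancel₀ (pow_ne_zero 2 hq0)
    · have ho' : ¬ Even j := Nat.not_even_iff_odd.mpr ho
      rw [if_neg ho']
      intro hd0
      have hsq : (nuSeq q l j) ^ 2 = 1 :=
        sq_eq_one_of _ (nuSeq_ne_zero hq0 hl0 j) hd0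
      have key : (q ^ (j + 1) * l) * ((q ^ (j + 1))⁻¹ * l⁻¹) = 1 := by
        field_simp
      have e : (nuSeq q l j) ^ 2 * (l ^ 2 * q ^ ((j + 1) + (j + 1))) = 1 := by
        simp only [nuSeq, if_neg ho']
        calc ((q ^ (j + 1))⁻¹ * l⁻¹) ^ 2 * (l ^ 2 * q ^ ((j + 1) + (j + 1)))
            = ((q ^ (j + 1) * l) * ((q ^ (j + 1))⁻¹ * l⁻¹)) ^ 2 := by ring
        _ = 1 := by rw [key, one_pow]
      rw [hsq, one_mul, hl, one_mul] at e
      exact hqru ((j + 1) + (j + 1)) (by omega) e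
  · -- Huniq : no collisions on the walk from l
    intro m n hmn hcol
    exfalso
    obtain ⟨hpar, hrel⟩ := nuSeq_collision hq0 hqru hl0 hmn hcol
    rw [hl, one_mul] at hrel
    exact hqru (m + n + 1) (by omega) hrel

/-- Multiplicity-freeness in the presence of an "end" eigenvalue, assuming no loop vertex
carries a nonzero eigenspace. -/
private theorem end_seed [FiniteDimensional F V] (C : CoreData F q V)
    (hq0 : q ≠ 0) (hqru : ∀ m : ℕ, 1 ≤ m → q ^ m ≠ 1)
    (hG : ∀ z : F, z ^ 2 = 1 ∨ z ^ 2 = (q ^ 2)⁻¹ → Module.End.eigenspace C.Y z = ⊥)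
    {x : F} (hx : Module.End.eigenspace C.Y x ≠ ⊥)
    (hxe : Module.End.eigenspace C.Y x⁻¹ = ⊥) (μ : F) :
    Module.finrank F (Module.End.eigenspace C.Y μ) ≤ 1 := by
  have hx0 : x ≠ 0 := by
    intro h; rw [h] at hx; exact hx C.eig_zero
  have hd : x⁻¹ - x ≠ 0 := by
    intro h
    have h1 : x⁻¹ = x := sub_eq_zero.mp h
    rw [h1] at hxe
    exact hx hxe
  obtain ⟨w0, hw0m, hw0⟩ := Submodule.exists_mem_ne_zero_of_ne_bot hx
  have hseed : C.Y w0 = x • w0 := Module.End.mem_eigenspace_iff.mp hw0m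
  have hc : (C.k0 - C.k1 * x) / (x⁻¹ - x) * (x⁻¹ - x) = C.k0 - C.k1 * x :=
    div_mul_cancel₀ _ hd
  have hE := C.E_shift hx0 hc hseed
  have hseed1 : C.t1 w0 = ((C.k0 - C.k1 * x) / (x⁻¹ - x)) • w0 := by
    have h0 : C.t1 w0 - ((C.k0 - C.k1 * x) / (x⁻¹ - x)) • w0 = 0 := by
      have hmem := Module.End.mem_eigenspace_iff.mpr hE
      rwa [hxe, Submodule.mem_bot] at hmem
    rwa [sub_eq_zero] at h0
  refine C.walk hq0 hw0 hx0 hseed hseed1 ?_ ?_ μ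
  · -- Hden via hG
    intro j
    rcases Nat.even_or_odd j with he | ho
    · rw [if_pos he]
      by_cases hdj : q * nuSeq q x j - q⁻¹ * (nuSeq q x j)⁻¹ = 0
      · right
        exact hG _ (Or.inr (sq_eq_qinv_of hq0 _ (nuSeq_ne_zero hq0 hx0 j) hdj))
      · left; exact hdj
    · have ho' : ¬ Even j := Nat.not_even_iff_odd.mpr ho
      rw [if_neg ho']
      by_cases hdj : (nuSeq q x j)⁻¹ - nuSeq q x j = 0
      · right
        exact hG _ (Or.inl (sq_eq_one_of _ (nuSeq_ne_zero hq0 hx0 j) hdj))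
      · left; exact hdj
  · -- Huniq via the fold
    intro m n hmn hcol
    obtain ⟨hpar, hrel⟩ := nuSeq_collision hq0 hqru hx0 hmn hcol
    obtain ⟨c, hc1, hc2, hc3⟩ := fold_mid hq0 hx0 hmn hpar hrel
    exact ⟨c, hc1, hc2, hG _ hc3⟩

end CoreData

namespace CoreData

variable {F : Type*} [Field F] {q : F} {V : Type*} [AddCommGroup V] [Module F V]

/-- The dual core data, swapping the roles of `(Y, t1)` and `(q⁻¹ Y⁻¹, t3)`. -/
private noncomputable def dual (C : CoreData F q V) (hq0 : q ≠ 0) : CoreData F q V where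
  Y := q⁻¹ • C.Yi
  Yi := q • C.Y
  t1 := C.t3
  t3 := C.t1
  k0 := C.k2
  k1 := C.k3
  k2 := C.k0
  k3 := C.k1
  hYYi := by
    rw [smul_mul_assoc, mul_smul_comm, smul_smul, inv_mul_cancel₀ hq0, one_smul, C.hYiY]
  hYiY := by
    rw [smul_mul_assoc, mul_smul_comm, smul_smul, mul_inv_cancel₀ hq0, one_smul, C.hYYi]
  ht1 := C.ht3
  ht3 := C.ht1
  star1 := by
    rw [mul_smul_comm, smul_mul_assoc, smul_smul]
    exact C.star3
  star3 := by
    rw [mul_smul_comm, smul_smul, mul_inv_cancel₀ hq0, one_smul,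
      smul_mul_assoc, smul_smul, inv_mul_cancel₀ hq0, one_smul,
      smul_smul, mul_assoc, inv_mul_cancel₀ hq0, mul_one]
    exact C.star1
  hirr := by
    intro W h1 h2 h3 h4
    apply C.hirr W
    · intro v hv
      have hmem := h2 v hv
      have e : C.Y v = q⁻¹ • ((q • C.Y) v) := by
        rw [LinearMap.smul_apply, smul_smul, inv_mul_cancel₀ hq0, one_smul]
      rw [e]
      exact Submodule.smul_mem _ _ hmem
    · intro v hv
      have hmem := h1 v hv
      have e : C.Yi v = q • ((q⁻¹ • C.Yi) v) := by
        rw [LinearMap.smul_apply, smul_smul, mul_inv_cancel₀ hq0, one_smul]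
      rw [e]
      exact Submodule.smul_mem _ _ hmem
    · exact h4
    · exact h3

private lemma eig_dual (C : CoreData F q V) (hq0 : q ≠ 0) {x : F} (hx : x ≠ 0) :
    Module.End.eigenspace (C.dual hq0).Y x = Module.End.eigenspace C.Y ((q * x)⁻¹) := by
  have hqx : q * x ≠ 0 := mul_ne_zero hq0 hx
  ext v
  simp only [Module.End.mem_eigenspace_iff]
  constructor
  · intro h
    have h2 : (q⁻¹ • C.Yi) v = x • v := h
    rw [LinearMap.smul_apply] at h2
    have h1 : C.Yi v = (q * x) • v := by
      calc C.Yi v = q • q⁻¹ • C.Yi v := by rw [smul_smul, mul_inv_cancel₀ hq0, one_smul]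
      _ = q • (x • v) := by rw [h2]
      _ = (q * x) • v := by rw [smul_smul]
    exact C.Y_eq hqx h1
  · intro h
    have h1 : C.Yi v = ((q * x)⁻¹)⁻¹ • v := C.Yi_eq (inv_ne_zero hqx) h
    rw [inv_inv] at h1
    show (q⁻¹ • C.Yi) v = x • v
    rw [LinearMap.smul_apply, h1, smul_smul]
    congr 1
    field_simp
private lemma dual_diag (C : CoreData F q V) (hq0 : q ≠ 0)
    (hY : (⨆ z : F, Module.End.eigenspace C.Y z) = ⊤) :
    (⨆ z : F, Module.End.eigenspace (C.dual hq0).Y z) = ⊤ := by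
  rw [← top_le_iff, ← hY]
  refine iSup_le fun z => ?_
  by_cases hz : z = 0
  · rw [hz, C.eig_zero]; exact bot_le
  · have hqz : (q * z)⁻¹ ≠ 0 := inv_ne_zero (mul_ne_zero hq0 hz)
    have h := C.eig_dual hq0 hqz
    rw [show (q * (q * z)⁻¹)⁻¹ = z from by field_simp] at h
    rw [← h]
    exact le_iSup _ _

private lemma dual_transfer (C : CoreData F q V) (hq0 : q ≠ 0)
    (h : ∀ z : F, Module.finrank F (Module.End.eigenspace (C.dual hq0).Y z) ≤ 1) (μ : F) :
    Module.finrank F (Module.End.eigenspace C.Y μ) ≤ 1 := by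
  by_cases hμ : μ = 0
  · rw [hμ, C.eig_zero, finrank_bot]; omega
  · have hx : (q * μ)⁻¹ ≠ 0 := inv_ne_zero (mul_ne_zero hq0 hμ)
    have he := C.eig_dual hq0 hx
    rw [show (q * (q * μ)⁻¹)⁻¹ = μ from by field_simp] at he
    rw [← he]
    exact h _

/-- The core multiplicity-freeness theorem. -/
private theorem mult_free [FiniteDimensional F V] [IsAlgClosed F] (C : CoreData F q V)
    (hq0 : q ≠ 0) (hqru : ∀ m : ℕ, 1 ≤ m → q ^ m ≠ 1)
    (hY : (⨆ z : F, Module.End.eigenspace C.Y z) = ⊤) (μ : F) :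
    Module.finrank F (Module.End.eigenspace C.Y μ) ≤ 1 := by
  by_cases hL1 : ∃ l : F, l ^ 2 = 1 ∧ Module.End.eigenspace C.Y l ≠ ⊥
  · obtain ⟨l, hl, hne⟩ := hL1
    exact C.loop_seed hq0 hqru hY hl hne μ
  by_cases hL2 : ∃ l : F, l ^ 2 = (q ^ 2)⁻¹ ∧ Module.End.eigenspace C.Y l ≠ ⊥
  · obtain ⟨l, hl, hne⟩ := hL2
    have hl0 : l ≠ 0 := by
      intro h
      rw [h, zero_pow (by norm_num)] at hl
      exact pow_ne_zero 2 hq0 (inv_eq_zero.mp hl.symm)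
    have hx0 : (q * l)⁻¹ ≠ 0 := inv_ne_zero (mul_ne_zero hq0 hl0)
    have hx1 : ((q * l)⁻¹) ^ 2 = 1 := by
      rw [inv_pow, mul_pow, hl, mul_inv_cancel₀ (pow_ne_zero 2 hq0), inv_one]
    have hnex : Module.End.eigenspace (C.dual hq0).Y ((q * l)⁻¹) ≠ ⊥ := by
      rw [C.eig_dual hq0 hx0, show (q * (q * l)⁻¹)⁻¹ = l from by field_simp]
      exact hne
    have hdY := C.dual_diag hq0 hY
    exact C.dual_transfer hq0
      (fun z => (C.dual hq0).loop_seed hq0 hqru hdY hx1 hnex z) μ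
  push_neg at hL1 hL2
  have hG : ∀ z : F, z ^ 2 = 1 ∨ z ^ 2 = (q ^ 2)⁻¹ → Module.End.eigenspace C.Y z = ⊥ := by
    intro z hz
    rcases hz with hz | hz
    · exact hL1 z hz
    · exact hL2 z hz
  by_cases hS : ∀ z : F, Module.End.eigenspace C.Y z = ⊥
  · rw [hS μ, finrank_bot]; omega
  push_neg at hS
  obtain ⟨x0, hx0ne⟩ := hS
  have hx00 : x0 ≠ 0 := fun h => hx0ne (by rw [h]; exact C.eig_zero)
  have hend : ∃ y : F, Module.End.eigenspace C.Y y ≠ ⊥ ∧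
      (Module.End.eigenspace C.Y y⁻¹ = ⊥ ∨
        Module.End.eigenspace C.Y ((q ^ 2 * y)⁻¹) = ⊥) := by
    by_contra hcon
    push_neg at hcon
    have hstep : ∀ y : F, y ≠ 0 → Module.End.eigenspace C.Y y ≠ ⊥ →
        Module.End.eigenspace C.Y ((q ^ 2)⁻¹ * y) ≠ ⊥ := by
      intro y hy0 hy
      have h1 := (hcon y hy).1
      have h2 := (hcon y⁻¹ h1).2
      rwa [show (q ^ 2 * y⁻¹)⁻¹ = (q ^ 2)⁻¹ * y from by rw [mul_inv, inv_inv]] at h2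
    have hall : ∀ n : ℕ, Module.End.eigenspace C.Y (((q ^ 2)⁻¹) ^ n * x0) ≠ ⊥ := by
      intro n
      induction n with
      | zero => simpa using hx0ne
      | succ k ih =>
        have hk0 : ((q ^ 2)⁻¹) ^ k * x0 ≠ 0 :=
          mul_ne_zero (pow_ne_zero _ (inv_ne_zero (pow_ne_zero 2 hq0))) hx00
        have h2 := hstep _ hk0 ih
        rwa [show (q ^ 2)⁻¹ * (((q ^ 2)⁻¹) ^ k * x0) = ((q ^ 2)⁻¹) ^ (k + 1) * x0 from by
          rw [pow_succ]; ring] at h2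
    have hinj : Function.Injective (fun n : ℕ => ((q ^ 2)⁻¹) ^ n * x0) := by
      intro a b hab
      simp only at hab
      have h1 := mul_right_cancel₀ hx00 hab
      rw [inv_pow, inv_pow] at h1
      have h2 := inv_inj.mp h1
      rw [← pow_mul, ← pow_mul] at h2
      have h3 := qpow_inj hq0 hqru h2
      omega
    have hfin := Module.End.finite_hasEigenvalue C.Y
    have hinf : Set.Infinite C.Y.HasEigenvalue :=
      Set.infinite_of_injective_forall_mem hinj (fun n => hall n)
    exact hfin.not_infinite hinf
  obtain ⟨y, hy, hcase⟩ := hend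
  have hy0 : y ≠ 0 := fun h => hy (by rw [h]; exact C.eig_zero)
  rcases hcase with hE | hA
  · exact C.end_seed hq0 hqru hG hy hE μ
  · have hx0 : (q * y)⁻¹ ≠ 0 := inv_ne_zero (mul_ne_zero hq0 hy0)
    have h1 : Module.End.eigenspace (C.dual hq0).Y ((q * y)⁻¹) ≠ ⊥ := by
      rw [C.eig_dual hq0 hx0, show (q * (q * y)⁻¹)⁻¹ = y from by field_simp]
      exact hy
    have h2 : Module.End.eigenspace (C.dual hq0).Y ((q * y)⁻¹)⁻¹ = ⊥ := by
      have hx0' : ((q * y)⁻¹)⁻¹ ≠ 0 := inv_ne_zero hx0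
      rw [C.eig_dual hq0 hx0',
        show (q * ((q * y)⁻¹)⁻¹)⁻¹ = (q ^ 2 * y)⁻¹ from by rw [inv_inv]; ring_nf]
      exact hA
    have hGd : ∀ z : F, z ^ 2 = 1 ∨ z ^ 2 = (q ^ 2)⁻¹ →
        Module.End.eigenspace (C.dual hq0).Y z = ⊥ := by
      intro z hz
      by_cases hz0 : z = 0
      · rw [hz0]; exact (C.dual hq0).eig_zero
      · rw [C.eig_dual hq0 hz0]
        apply hG
        rcases hz with hz | hz
        · right
          rw [inv_pow, mul_pow, hz, mul_one]
        · left
          rw [inv_pow, mul_pow, hz, mul_inv_cancel₀ (pow_ne_zero 2 hq0), inv_one]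
    exact C.dual_transfer hq0
      (fun z => (C.dual hq0).end_seed hq0 hqru hGd h1 h2 z) μ

end CoreData

section Bridge

variable {F : Type*} [Field F] {q : F} {V : Type*} [AddCommGroup V] [Module F V]

private lemma HqMod.exists_kappa [FiniteDimensional F V] [IsAlgClosed F]
    (M : HqMod F q V) (hirr : M.Irreducible) (i : Fin 4) :
    ∃ k : F, M.t i + M.s i = k • (1 : Module.End F V) := by
  haveI := hirr.1
  obtain ⟨k, hk⟩ := Module.End.exists_eigenvalue (M.t i + M.s i)
  refine ⟨k, ?_⟩
  have hinv : ∀ j : Fin 4, ∀ v ∈ Module.End.eigenspace (M.t i + M.s i) k,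
      M.t j v ∈ Module.End.eigenspace (M.t i + M.s i) k := by
    intro j v hv
    rw [Module.End.mem_eigenspace_iff] at hv ⊢
    have h2 := LinearMap.ext_iff.mp (M.central i j).eq v
    rw [Module.End.mul_apply, Module.End.mul_apply] at h2
    rw [h2, hv, map_smul]
  rcases hirr.2 (Module.End.eigenspace (M.t i + M.s i) k) hinv with h | h
  · exact absurd h hk
  · ext v
    have hv : v ∈ Module.End.eigenspace (M.t i + M.s i) k := h ▸ Submodule.mem_top
    rw [LinearMap.smul_apply, Module.End.one_apply]
    exact Module.End.mem_eigenspace_iff.mp hv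

end Bridge

theorem stmt18 {F : Type*} [Field F] [IsAlgClosed F] {q : F}
    (hq : q ≠ 0) (hqru : ∀ m : ℕ, 1 ≤ m → q ^ m ≠ 1)
    {V : Type*} [AddCommGroup V] [Module F V] [FiniteDimensional F V]
    (M : HqMod F q V) (hirr : M.Irreducible) (hY : Diagonalizable M.Y)
    (μ : F) (hμ : Module.End.HasEigenvalue M.Y μ) :
    Module.finrank F (Module.End.eigenspace M.Y μ) = 1 := by
  classical
  haveI hnt := hirr.1
  obtain ⟨k0, hk0⟩ := M.exists_kappa hirr 0
  obtain ⟨k1, hk1⟩ := M.exists_kappa hirr 1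
  obtain ⟨k2, hk2⟩ := M.exists_kappa hirr 2
  obtain ⟨k3, hk3⟩ := M.exists_kappa hirr 3
  have hs1 : M.s 1 = k1 • (1 : Module.End F V) - M.t 1 := by rw [← hk1]; abel
  have hs3 : M.s 3 = k3 • (1 : Module.End F V) - M.t 3 := by rw [← hk3]; abel
  -- products
  have hYYi : M.Y * M.Yinv = 1 := by
    show M.t 0 * M.t 1 * (M.s 1 * M.s 0) = 1
    rw [mul_assoc, ← mul_assoc (M.t 1), M.ts 1, one_mul, M.ts 0]
  have hYiY : M.Yinv * M.Y = 1 := by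
    show M.s 1 * M.s 0 * (M.t 0 * M.t 1) = 1
    rw [mul_assoc, ← mul_assoc (M.s 0), M.st 0, one_mul, M.st 1]
  have ht1sq : M.t 1 * M.t 1 = k1 • M.t 1 - 1 := by
    have h := congrArg (fun g => g * M.t 1) hk1
    simp only [add_mul, smul_mul_assoc, one_mul] at h
    rw [M.st 1] at h
    exact eq_sub_of_add_eq h
  have ht3sq : M.t 3 * M.t 3 = k3 • M.t 3 - 1 := by
    have h := congrArg (fun g => g * M.t 3) hk3
    simp only [add_mul, smul_mul_assoc, one_mul] at h
    rw [M.st 3] at h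
    exact eq_sub_of_add_eq h
  have ht0 : M.t 0 = M.Y * M.s 1 := by
    show M.t 0 = M.t 0 * M.t 1 * M.s 1
    rw [mul_assoc, M.ts 1, mul_one]
  have hs0 : M.s 0 = M.t 1 * M.Yinv := by
    show M.s 0 = M.t 1 * (M.s 1 * M.s 0)
    rw [← mul_assoc, M.ts 1, one_mul]
  have hstar1 : M.t 1 * M.Yinv - M.Y * M.t 1 = k0 • (1 : Module.End F V) - k1 • M.Y := by
    have h : M.Y * M.t 1 = k1 • M.Y - M.t 0 := by
      have h2 : M.Y * (M.t 1 + M.s 1) = M.Y * (k1 • (1 : Module.End F V)) := by rw [hk1]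
      rw [mul_add, mul_smul_comm, mul_one, ← ht0] at h2
      exact eq_sub_of_add_eq h2
    rw [h, ← hs0, ← hk0]
    abel
  -- cancellation helpers
  have cs0 : ∀ g : Module.End F V, M.s 0 * (M.t 0 * g) = g := fun g => by
    rw [← mul_assoc, M.st 0, one_mul]
  have cs1 : ∀ g : Module.End F V, M.s 1 * (M.t 1 * g) = g := fun g => by
    rw [← mul_assoc, M.st 1, one_mul]
  have hT23 : M.t 2 * M.t 3 = q⁻¹ • M.Yinv := by
    have h := congrArg (fun g => M.s 1 * (M.s 0 * g)) M.prodEq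
    simp only [mul_assoc] at h
    rw [cs0, cs1] at h
    rw [h, mul_smul_comm, mul_smul_comm, mul_one]
    rfl
  have ht2 : M.t 2 = q⁻¹ • (M.Yinv * M.s 3) := by
    have h : M.t 2 = M.t 2 * M.t 3 * M.s 3 := by rw [mul_assoc, M.ts 3, mul_one]
    rw [h, hT23, smul_mul_assoc]
  have hs2 : M.s 2 = q • (M.t 3 * M.Y) := by
    have h1 : M.t 2 * (q • (M.t 3 * M.Y)) = 1 := by
      rw [mul_smul_comm, ← mul_assoc, hT23, smul_mul_assoc, hYiY, smul_smul,
        mul_inv_cancel₀ hq, one_smul]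
    calc M.s 2 = M.s 2 * (M.t 2 * (q • (M.t 3 * M.Y))) := by rw [h1, mul_one]
    _ = M.s 2 * M.t 2 * (q • (M.t 3 * M.Y)) := by rw [mul_assoc]
    _ = q • (M.t 3 * M.Y) := by rw [M.st 2, one_mul]
  have hstar3 : q • (M.t 3 * M.Y) - q⁻¹ • (M.Yinv * M.t 3)
      = k2 • (1 : Module.End F V) - (k3 * q⁻¹) • M.Yinv := by
    have h := hk2
    rw [ht2, hs2, hs3, mul_sub, mul_smul_comm, mul_one, smul_sub, smul_smul] at h
    rw [show k3 * q⁻¹ = q⁻¹ * k3 from mul_comm _ _, ← h]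
    abel
  have hirrC : ∀ W : Submodule F V, (∀ v ∈ W, M.Y v ∈ W) → (∀ v ∈ W, M.Yinv v ∈ W) →
      (∀ v ∈ W, M.t 1 v ∈ W) → (∀ v ∈ W, M.t 3 v ∈ W) → W = ⊥ ∨ W = ⊤ := by
    intro W hW1 hW2 h1 h3
    apply hirr.2
    intro i v hv
    fin_cases i
    · show M.t 0 v ∈ W
      have e : M.t 0 v = M.Y (k1 • v - M.t 1 v) := by
        calc M.t 0 v = (M.Y * M.s 1) v := by rw [← ht0]
        _ = M.Y (M.s 1 v) := by rw [Module.End.mul_apply]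
        _ = M.Y (k1 • v - M.t 1 v) := by
            rw [hs1, LinearMap.sub_apply, LinearMap.smul_apply, Module.End.one_apply]
      rw [e]
      exact hW1 _ (Submodule.sub_mem _ (Submodule.smul_mem _ _ hv) (h1 v hv))
    · exact h1 v hv
    · show M.t 2 v ∈ W
      have e : M.t 2 v = q⁻¹ • (M.Yinv (k3 • v - M.t 3 v)) := by
        calc M.t 2 v = (q⁻¹ • (M.Yinv * M.s 3)) v := by rw [← ht2]
        _ = q⁻¹ • (M.Yinv (M.s 3 v)) := by rw [LinearMap.smul_apply, Module.End.mul_apply]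
        _ = q⁻¹ • (M.Yinv (k3 • v - M.t 3 v)) := by
            rw [hs3, LinearMap.sub_apply, LinearMap.smul_apply, Module.End.one_apply]
      rw [e]
      exact Submodule.smul_mem _ _
        (hW2 _ (Submodule.sub_mem _ (Submodule.smul_mem _ _ hv) (h3 v hv)))
    · exact h3 v hv
  let C : CoreData F q V :=
    ⟨M.Y, M.Yinv, M.t 1, M.t 3, k0, k1, k2, k3, hYYi, hYiY, ht1sq, ht3sq, hstar1,
      hstar3, hirrC⟩
  have hYdiag : (⨆ z : F, Module.End.eigenspace C.Y z) = ⊤ := hY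
  have hle : Module.finrank F (Module.End.eigenspace M.Y μ) ≤ 1 :=
    C.mult_free hq hqru hYdiag μ
  have hge : 0 < Module.finrank F (Module.End.eigenspace M.Y μ) := by
    obtain ⟨v, hvm, hv0⟩ := Submodule.exists_mem_ne_zero_of_ne_bot hμ
    haveI : Nontrivial (Module.End.eigenspace M.Y μ) :=
      ⟨⟨v, hvm⟩, 0, by simp [Subtype.ext_iff, hv0]⟩
    exact Module.finrank_pos
  omega
end

section
/- Let V be an H_q-module with parameter sequence (k_0,k_1,k_2,k_3) such that k_0^2 ≠ 1. Define the operators F⁺ = (k_0 − k_0^{-1})^{-1}(t_0 − k_0^{-1}·id_V) and F⁻ = (k_0^{-1} − k_0)^{-1}(t_0 − k_0·id_V), and set A = Y + Y^{-1} where Y = t_0 t_1. Then, as operators on V: A F⁺ = (k_0 − k_0^{-1}) F⁺ t_1 F⁺ + k_0^{-1}(k_1 + k_1^{-1}) F⁺, and A F⁻ = (k_0^{-1} − k_0) F⁻ t_1 F⁻ + k_0 (k_1 + k_1^{-1}) F⁻. -/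
private lemma stmt19_aux {F : Type*} [Field F] {q : F}
    {V : Type*} [AddCommGroup V] [Module F V]
    (M : HqMod F q V) (μ ν c : F)
    (hμν : μ * ν = 1) (hne : μ - ν ≠ 0)
    (hsum : M.t 0 + M.s 0 = (μ + ν) • (1 : Module.End F V))
    (h1sum : M.t 1 + M.s 1 = c • (1 : Module.End F V))
    (Fo : Module.End F V)
    (hFdef : Fo = (μ - ν)⁻¹ • (M.t 0 - ν • (1 : Module.End F V))) :
    M.A * Fo = (μ - ν) • (Fo * M.t 1 * Fo) + (ν * c) • Fo := by
  have hs0 : M.s 0 = (μ + ν) • (1 : Module.End F V) - M.t 0 := eq_sub_of_add_eq' hsum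
  have hs1 : M.s 1 = c • (1 : Module.End F V) - M.t 1 := eq_sub_of_add_eq' h1sum
  have key1 : (μ - ν) • Fo = M.t 0 - ν • (1 : Module.End F V) := by
    rw [hFdef, smul_smul, mul_inv_cancel₀ hne, one_smul]
  have key2' : (μ - ν) • (M.s 0 * Fo) = (μ - ν) • (ν • Fo) := by
    calc (μ - ν) • (M.s 0 * Fo) = M.s 0 * ((μ - ν) • Fo) := (mul_smul_comm _ _ _).symm
      _ = M.s 0 * (M.t 0 - ν • 1) := by rw [key1]
      _ = 1 - ν • M.s 0 := by rw [mul_sub, M.st 0, mul_smul_comm, mul_one]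
      _ = 1 - ν • ((μ + ν) • (1 : Module.End F V) - M.t 0) := by rw [hs0]
      _ = ν • (M.t 0 - ν • (1 : Module.End F V)) := by
          have hx : ν * (μ + ν) = 1 + ν * ν := by rw [mul_add, mul_comm ν μ, hμν]
          rw [smul_sub, smul_smul, hx, smul_sub, smul_smul]
          module
      _ = (μ - ν) • (ν • Fo) := by rw [smul_comm, key1]
  have key2 : M.s 0 * Fo = ν • Fo := smul_right_injective _ hne key2'
  have h3 : M.t 0 * M.t 1 * Fo
      = (μ - ν) • (Fo * M.t 1 * Fo) + ν • (M.t 1 * Fo) := by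
    have h : (μ - ν) • (Fo * M.t 1 * Fo) = (M.t 0 - ν • 1) * (M.t 1 * Fo) := by
      rw [mul_assoc, ← smul_mul_assoc, key1]
    rw [h, sub_mul, smul_mul_assoc, one_mul, mul_assoc]
    abel
  have h4 : M.s 1 * M.s 0 * Fo = (ν * c) • Fo - ν • (M.t 1 * Fo) := by
    rw [mul_assoc, key2, mul_smul_comm, hs1, sub_mul, smul_mul_assoc, one_mul,
      smul_sub, smul_smul]
  rw [HqMod.A, add_mul, HqMod.Y, HqMod.Yinv, h3, h4]
  abel

theorem stmt19 {F : Type*} [Field F] [IsAlgClosed F] {q : F}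
    (hq : q ≠ 0) (hqru : ∀ m : ℕ, 1 ≤ m → q ^ m ≠ 1)
    {V : Type*} [AddCommGroup V] [Module F V] [FiniteDimensional F V]
    (M : HqMod F q V) (k : Fin 4 → F) (hk : M.IsParamSeq k)
    (hk0 : (k 0) ^ 2 ≠ 1)
    (Fp Fm : Module.End F V)
    (hFp : Fp = (k 0 - (k 0)⁻¹)⁻¹ • (M.t 0 - (k 0)⁻¹ • (1 : Module.End F V)))
    (hFm : Fm = ((k 0)⁻¹ - k 0)⁻¹ • (M.t 0 - (k 0) • (1 : Module.End F V))) :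
    M.A * Fp = (k 0 - (k 0)⁻¹) • (Fp * M.t 1 * Fp)
      + ((k 0)⁻¹ * (k 1 + (k 1)⁻¹)) • Fp ∧
    M.A * Fm = ((k 0)⁻¹ - k 0) • (Fm * M.t 1 * Fm)
      + ((k 0) * (k 1 + (k 1)⁻¹)) • Fm := by
  obtain ⟨hk0ne, hkeq0⟩ := hk 0
  obtain ⟨hk1ne, hkeq1⟩ := hk 1
  have hne : k 0 - (k 0)⁻¹ ≠ 0 := by
    intro h
    apply hk0
    have h' : k 0 = (k 0)⁻¹ := sub_eq_zero.mp h
    rw [pow_two]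
    nth_rewrite 2 [h']
    exact mul_inv_cancel₀ hk0ne
  have hne' : (k 0)⁻¹ - k 0 ≠ 0 := fun h => hne (by
    have := neg_eq_zero.mpr h
    rwa [neg_sub] at this)
  constructor
  · exact stmt19_aux M (k 0) (k 0)⁻¹ (k 1 + (k 1)⁻¹)
      (mul_inv_cancel₀ hk0ne) hne hkeq0 hkeq1 Fp hFp
  · exact stmt19_aux M (k 0)⁻¹ (k 0) (k 1 + (k 1)⁻¹)
      (inv_mul_cancel₀ hk0ne) hne' (by rw [add_comm ((k 0)⁻¹)]; exact hkeq0) hkeq1 Fm hFm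
end
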